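/- Let t₀ ≥ 0 and let f, g : (t₀, ∞) → ℝ be twice continuously differentiable functions satisfying t f″(t) + f′(t) + 2t f′(t)(f′(t)² + g′(t)²) = 0 and t g″(t) + g′(t) + 2t g′(t)(f′(t)² + g′(t)²) = 0 for all t > t₀. Define F(u, v) = f(u² + v²) and G(u, v) = g(u² + v²) on the region {(u,v) : u² + v² > t₀}. Then the graph (u, v, F(u, v), G(u, v)) in ℝ⁴ satisfies the minimal surface equations: g₂₂ ∂²h/∂u² + g₁₁ ∂²h/∂v² − 2 g₁₂ ∂²h/∂u∂v = 0 for h = F and h = G, where g₁₁ = 1 + F_u² + G_u², g₂₂ = 1 + F_v² + G_v², g₁₂ = F_u F_v + G_u G_v. -/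

import Mathlib

/-! For `F(u, v) = h(u² + v²)` and `t = u² + v²` the chain rule gives `F_u = 2u h′`, `F_v = 2v h′`,
`F_uu = 4u² h″ + 2h′`, `F_vv = 4v² h″ + 2h′`, `F_uv = 4uv h″`. With `S = f′² + g′²` the metric is
`g₁₁ = 1 + 4u²S`, `g₂₂ = 1 + 4v²S`, `g₁₂ = 4uvS`; substituting, the `h″`-terms of order `S`
cancel and the minimal surface operator applied to `F` (resp. `G`) is exactly `4` times the left-hand
side of the radial equation for `f` (resp. `g`) at `t`. -/

noncomputable section

def pd1 (F : ℝ → ℝ → ℝ) (u v : ℝ) : ℝ := deriv (fun x => F x v) u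

def pd2 (F : ℝ → ℝ → ℝ) (u v : ℝ) : ℝ := deriv (fun y => F u y) v

/-- The minimal surface equations for the graph `(u, v, F1(u,v), F2(u,v)) ⊂ ℝ⁴`. -/
def MinimalGraphEq (F1 F2 : ℝ → ℝ → ℝ) (u v : ℝ) : Prop :=
  ((1 + (pd2 F1 u v) ^ 2 + (pd2 F2 u v) ^ 2) * pd1 (pd1 F1) u v
    + (1 + (pd1 F1 u v) ^ 2 + (pd1 F2 u v) ^ 2) * pd2 (pd2 F1) u v
    - 2 * (pd1 F1 u v * pd2 F1 u v + pd1 F2 u v * pd2 F2 u v) * pd1 (pd2 F1) u v = 0) ∧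
  ((1 + (pd2 F1 u v) ^ 2 + (pd2 F2 u v) ^ 2) * pd1 (pd1 F2) u v
    + (1 + (pd1 F1 u v) ^ 2 + (pd1 F2 u v) ^ 2) * pd2 (pd2 F2) u v
    - 2 * (pd1 F1 u v * pd2 F1 u v + pd1 F2 u v * pd2 F2 u v) * pd1 (pd2 F2) u v = 0)

open Filter Topology

namespace Radial

variable {h : ℝ → ℝ} {u v : ℝ}

theorem hasDerivAt_comp_sq_add (c x : ℝ) (hd : DifferentiableAt ℝ h (x ^ 2 + c)) :
    HasDerivAt (fun x => h (x ^ 2 + c)) (deriv h (x ^ 2 + c) * (2 * x)) x := by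
  have hsq : HasDerivAt (fun x : ℝ => x ^ 2 + c) (2 * x) x := by
    simpa using (hasDerivAt_pow 2 x).add_const c
  exact hd.hasDerivAt.comp x hsq

theorem pd2_eq_pd1_swap (x y : ℝ) :
    pd2 (fun u v => h (u ^ 2 + v ^ 2)) x y = pd1 (fun u v => h (u ^ 2 + v ^ 2)) y x := by
  simp only [pd1, pd2, add_comm (x ^ 2)]

theorem pd1_eq (hd : DifferentiableAt ℝ h (u ^ 2 + v ^ 2)) :
    pd1 (fun u v => h (u ^ 2 + v ^ 2)) u v = deriv h (u ^ 2 + v ^ 2) * (2 * u) :=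
  (hasDerivAt_comp_sq_add _ u hd).deriv

theorem pd2_eq (hd : DifferentiableAt ℝ h (u ^ 2 + v ^ 2)) :
    pd2 (fun u v => h (u ^ 2 + v ^ 2)) u v = deriv h (u ^ 2 + v ^ 2) * (2 * v) := by
  rw [pd2_eq_pd1_swap, pd1_eq (by rwa [add_comm]), add_comm]

theorem eventually_differentiableAt_sq_add
    (hd : ∀ᶠ t in 𝓝 (u ^ 2 + v ^ 2), DifferentiableAt ℝ h t) :
    ∀ᶠ x in 𝓝 u, DifferentiableAt ℝ h (x ^ 2 + v ^ 2) :=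
  (by fun_prop : Continuous fun x : ℝ => x ^ 2 + v ^ 2).continuousAt.eventually hd

variable (hd : ∀ᶠ t in 𝓝 (u ^ 2 + v ^ 2), DifferentiableAt ℝ h t)
  (hd' : DifferentiableAt ℝ (deriv h) (u ^ 2 + v ^ 2))
include hd hd'

theorem pd1_pd1_eq :
    pd1 (pd1 (fun u v => h (u ^ 2 + v ^ 2))) u v
      = deriv (deriv h) (u ^ 2 + v ^ 2) * (2 * u) * (2 * u) + deriv h (u ^ 2 + v ^ 2) * 2 := by
  have hev : (fun x => pd1 (fun u v => h (u ^ 2 + v ^ 2)) x v)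
      =ᶠ[𝓝 u] fun x => deriv h (x ^ 2 + v ^ 2) * (2 * x) :=
    (eventually_differentiableAt_sq_add hd).mono fun x hx => pd1_eq hx
  have hder := (hasDerivAt_comp_sq_add _ u hd').mul ((hasDerivAt_id u).const_mul 2)
  simp only [Pi.mul_def, mul_one, id] at hder
  rw [pd1, hev.deriv_eq, hder.deriv]

theorem pd1_pd2_eq :
    pd1 (pd2 (fun u v => h (u ^ 2 + v ^ 2))) u v
      = deriv (deriv h) (u ^ 2 + v ^ 2) * (2 * u) * (2 * v) := by
  have hev : (fun x => pd2 (fun u v => h (u ^ 2 + v ^ 2)) x v)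
      =ᶠ[𝓝 u] fun x => deriv h (x ^ 2 + v ^ 2) * (2 * v) :=
    (eventually_differentiableAt_sq_add hd).mono fun x hx => pd2_eq hx
  rw [pd1, hev.deriv_eq, ((hasDerivAt_comp_sq_add _ u hd').mul_const (2 * v)).deriv]

theorem pd2_pd2_eq :
    pd2 (pd2 (fun u v => h (u ^ 2 + v ^ 2))) u v
      = deriv (deriv h) (u ^ 2 + v ^ 2) * (2 * v) * (2 * v) + deriv h (u ^ 2 + v ^ 2) * 2 := by
  have hswap : pd2 (pd2 (fun u v => h (u ^ 2 + v ^ 2))) u v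
      = pd1 (pd1 (fun u v => h (u ^ 2 + v ^ 2))) v u := by
    conv_lhs => rw [pd2]; simp only [pd2_eq_pd1_swap]
    rfl
  rw [add_comm] at hd hd'
  rw [hswap, pd1_pd1_eq hd hd', add_comm (v ^ 2)]

end Radial

theorem ContDiffOn.differentiableAt_and_deriv {h : ℝ → ℝ} {s : Set ℝ} (hs : IsOpen s)
    (hh : ContDiffOn ℝ 2 h s) {t : ℝ} (ht : t ∈ s) :
    (∀ᶠ x in 𝓝 t, DifferentiableAt ℝ h x) ∧ DifferentiableAt ℝ (deriv h) t :=
  ⟨eventually_of_mem (hs.mem_nhds ht) fun _ hx =>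
      (hh.differentiableOn two_ne_zero).differentiableAt (hs.mem_nhds hx),
    ((hh.deriv_of_isOpen hs (m := 1) (by norm_num)).differentiableOn one_ne_zero).differentiableAt
      (hs.mem_nhds ht)⟩

open Radial in
theorem minimalGraphEq_of_radial_ode {f g : ℝ → ℝ} {u v : ℝ}
    (hf : ∀ᶠ t in 𝓝 (u ^ 2 + v ^ 2), DifferentiableAt ℝ f t)
    (hf' : DifferentiableAt ℝ (deriv f) (u ^ 2 + v ^ 2))
    (hg : ∀ᶠ t in 𝓝 (u ^ 2 + v ^ 2), DifferentiableAt ℝ g t)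
    (hg' : DifferentiableAt ℝ (deriv g) (u ^ 2 + v ^ 2))
    (hodef : (u ^ 2 + v ^ 2) * deriv (deriv f) (u ^ 2 + v ^ 2) + deriv f (u ^ 2 + v ^ 2)
      + 2 * (u ^ 2 + v ^ 2) * deriv f (u ^ 2 + v ^ 2)
        * (deriv f (u ^ 2 + v ^ 2) ^ 2 + deriv g (u ^ 2 + v ^ 2) ^ 2) = 0)
    (hodeg : (u ^ 2 + v ^ 2) * deriv (deriv g) (u ^ 2 + v ^ 2) + deriv g (u ^ 2 + v ^ 2)
      + 2 * (u ^ 2 + v ^ 2) * deriv g (u ^ 2 + v ^ 2)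
        * (deriv f (u ^ 2 + v ^ 2) ^ 2 + deriv g (u ^ 2 + v ^ 2) ^ 2) = 0) :
    MinimalGraphEq (fun u v => f (u ^ 2 + v ^ 2)) (fun u v => g (u ^ 2 + v ^ 2)) u v := by
  rw [MinimalGraphEq, pd1_eq hf.self_of_nhds, pd2_eq hf.self_of_nhds, pd1_eq hg.self_of_nhds,
    pd2_eq hg.self_of_nhds, pd1_pd1_eq hf hf', pd2_pd2_eq hf hf', pd1_pd2_eq hf hf',
    pd1_pd1_eq hg hg', pd2_pd2_eq hg hg', pd1_pd2_eq hg hg']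
  exact ⟨by linear_combination 4 * hodef, by linear_combination 4 * hodeg⟩

theorem stmt16_general (t0 : ℝ) (f g : ℝ → ℝ)
    (hf : ContDiffOn ℝ 2 f (Set.Ioi t0)) (hg : ContDiffOn ℝ 2 g (Set.Ioi t0))
    (hodef : ∀ t, t0 < t →
      t * deriv (deriv f) t + deriv f t
        + 2 * t * deriv f t * ((deriv f t) ^ 2 + (deriv g t) ^ 2) = 0)
    (hodeg : ∀ t, t0 < t →
      t * deriv (deriv g) t + deriv g t
        + 2 * t * deriv g t * ((deriv f t) ^ 2 + (deriv g t) ^ 2) = 0)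
    (u v : ℝ) (huv : t0 < u ^ 2 + v ^ 2) :
    MinimalGraphEq (fun u v => f (u ^ 2 + v ^ 2)) (fun u v => g (u ^ 2 + v ^ 2)) u v := by
  obtain ⟨hf₁, hf₂⟩ := hf.differentiableAt_and_deriv isOpen_Ioi huv
  obtain ⟨hg₁, hg₂⟩ := hg.differentiableAt_and_deriv isOpen_Ioi huv
  exact minimalGraphEq_of_radial_ode hf₁ hf₂ hg₁ hg₂ (hodef _ huv) (hodeg _ huv)

/-- if `f, g` are C² on `(t₀, ∞)` and solve the radial ODE system
`t h″ + h′ + 2t h′((f′)² + (g′)²) = 0` there, then the rotationally symmetric graph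
`(u, v, f(u² + v²), g(u² + v²))` satisfies the minimal surface equations on the
region `u² + v² > t₀`. -/
theorem stmt16 (t0 : ℝ) (ht0 : 0 ≤ t0) (f g : ℝ → ℝ)
    (hf : ContDiffOn ℝ 2 f (Set.Ioi t0)) (hg : ContDiffOn ℝ 2 g (Set.Ioi t0))
    (hodef : ∀ t, t0 < t →
      t * deriv (deriv f) t + deriv f t
        + 2 * t * deriv f t * ((deriv f t) ^ 2 + (deriv g t) ^ 2) = 0)
    (hodeg : ∀ t, t0 < t →
      t * deriv (deriv g) t + deriv g t
        + 2 * t * deriv g t * ((deriv f t) ^ 2 + (deriv g t) ^ 2) = 0)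
    (u v : ℝ) (huv : t0 < u ^ 2 + v ^ 2) :
    MinimalGraphEq (fun u v => f (u ^ 2 + v ^ 2)) (fun u v => g (u ^ 2 + v ^ 2)) u v :=
  stmt16_general t0 f g hf hg hodef hodeg u v huv
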